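/- Every weighted web contains a maximal wave with respect to the edgewise order (f ≤ g iff f(e) ≤ g(e) for all edges e). -/

import Mathlib

open scoped ENNReal NNReal Classical

/-- A network: a loopless digraph with edge set `E` on vertex type `V`,
capacity function `c`, source `s` (no in-edges) and sink `t` (no out-edges). -/
structure Network (V : Type) where
  E : Set (V × V)
  loopless : ∀ v, (v, v) ∉ E
  c : V × V → ℝ≥0
  s : V
  t : V
  ne : s ≠ t
  no_in_s : ∀ v, (v, s) ∉ E
  no_out_t : ∀ v, (t, v) ∉ E

variable {V : Type}

/-- Out-degree of `f` at `x`: sum of `f` over edges leaving `x`. -/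
noncomputable def dplus (f : V × V → ℝ≥0) (x : V) : ℝ≥0∞ := ∑' v, (f (x, v) : ℝ≥0∞)

/-- In-degree of `f` at `x`: sum of `f` over edges entering `x`. -/
noncomputable def dminus (f : V × V → ℝ≥0) (x : V) : ℝ≥0∞ := ∑' v, (f (v, x) : ℝ≥0∞)

/-- A flow: nonnegative, supported on the edges, below capacity, Kirchhoff away from s,t. -/
structure IsFlow (N : Network V) (f : V × V → ℝ≥0) : Prop where
  supp : ∀ e, e ∉ N.E → f e = 0
  cap : ∀ e, f e ≤ N.c e
  kirchhoff : ∀ x, x ≠ N.s → x ≠ N.t → dplus f x = dminus f x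

noncomputable def flowValue (N : Network V) (f : V × V → ℝ≥0) : ℝ≥0∞ := dplus f N.s

/-- An s–t cut, given by its vertex side `S`. -/
def IsCut (N : Network V) (S : Set V) : Prop := N.s ∈ S ∧ N.t ∉ S

/-- The edges of the cut `E(S, V∖S)`. -/
def cutEdges (N : Network V) (S : Set V) : Set (V × V) := {e ∈ N.E | e.1 ∈ S ∧ e.2 ∉ S}

noncomputable def cutCap (N : Network V) (S : Set V) : ℝ≥0∞ :=
  ∑' e : cutEdges N S, (N.c e : ℝ≥0∞)

noncomputable def cutFlow (N : Network V) (f : V × V → ℝ≥0) (S : Set V) : ℝ≥0∞ :=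
  ∑' e : cutEdges N S, (f e : ℝ≥0∞)

/-- `f` saturates the cut `E(S,V∖S)` and vanishes on the reverse cut `E(V∖S,S)`. -/
def Orthogonal (N : Network V) (f : V × V → ℝ≥0) (S : Set V) : Prop :=
  (∀ e ∈ cutEdges N S, f e = N.c e) ∧ (∀ e ∈ cutEdges N Sᶜ, f e = 0)

/-- A weighted web. -/
structure Web (V : Type) where
  D : Set (V × V)
  A : Set V
  B : Set V
  w : V → ℝ≥0

def IsWalk (E : Set (V × V)) (p : List V) : Prop := p.Chain' (fun a b => (a, b) ∈ E)

/-- A (finite, directed) path/walk from `A` to `B` in the digraph with edge set `E`. -/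
def IsABPath (E : Set (V × V)) (A B : Set V) (p : List V) : Prop :=
  IsWalk E p ∧ (∃ a ∈ A, p.head? = some a) ∧ (∃ b ∈ B, p.getLast? = some b)

/-- `S` is `A`–`B`-separating in the web `W`. -/
def Separates (W : Web V) (S : Set V) : Prop :=
  ∀ p : List V, IsABPath W.D W.A W.B p → ∃ x ∈ S, x ∈ p

/-- A current in a weighted web. -/
structure IsCurrent (W : Web V) (f : V × V → ℝ≥0) : Prop where
  supp : ∀ e, e ∉ W.D → f e = 0
  out_le : ∀ x, dplus f x ≤ (W.w x : ℝ≥0∞)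
  in_le : ∀ x, dminus f x ≤ (W.w x : ℝ≥0∞)
  flow_ineq : ∀ x, x ∉ W.A → dplus f x ≤ dminus f x
  a_in : ∀ a ∈ W.A, dminus f a = 0
  b_out : ∀ b ∈ W.B, dplus f b = 0

def SAT (W : Web V) (f : V × V → ℝ≥0) : Set V :=
  {x | x ∈ W.A ∨ dminus f x = (W.w x : ℝ≥0∞)}

def SINK (f : V × V → ℝ≥0) : Set V := {x | dplus f x = 0}

def TER (W : Web V) (f : V × V → ℝ≥0) : Set V := SAT W f ∩ SINK f

/-- The set of vertices separated ("roofed") from `B` by `S`. -/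
def RF (W : Web V) (S : Set V) : Set V :=
  {v | ∀ p : List V, IsABPath W.D {v} W.B p → ∃ x ∈ S, x ∈ p}

/-- The essential vertices of `S`: those `x ∈ S` not separated from `B` by `S∖{x}`. -/
def Essential (W : Web V) (S : Set V) : Set V :=
  {x ∈ S | ∃ p : List V, IsABPath W.D {x} W.B p ∧ ∀ y ∈ p, y ∈ S → y = x}

def RFo (W : Web V) (S : Set V) : Set V := RF W S \ Essential W S

/-- A wave: a current whose terminal set separates, sending no flow outside `RF(TER f)`. -/
def IsWave (W : Web V) (f : V × V → ℝ≥0) : Prop :=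
  IsCurrent W f ∧ Separates W (TER W f) ∧ ∀ x, x ∉ RF W (TER W f) → dplus f x = 0

def Bipartite (W : Web V) : Prop :=
  (∀ v : V, v ∈ W.A ∪ W.B) ∧ ∀ e ∈ W.D, e.1 ∈ W.A ∧ e.2 ∈ W.B

def IsHindrance (W : Web V) (f : V × V → ℝ≥0) : Prop :=
  IsWave W f ∧ ∃ a ∈ W.A, a ∉ Essential W (TER W f) ∧ dplus f a < (W.w a : ℝ≥0∞)

def Hindered (W : Web V) : Prop := ∃ f, IsHindrance W f

def Loose (W : Web V) : Prop :=
  (∀ f, IsWave W f → ∀ e, f e = 0) ∧ ¬ IsHindrance W (fun _ => 0)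

/-- A web-flow: a current satisfying Kirchhoff's law outside `A ∪ B`. -/
def IsWebFlow (W : Web V) (f : V × V → ℝ≥0) : Prop :=
  IsCurrent W f ∧ ∀ x, x ∉ W.A ∪ W.B → dplus f x = dminus f x

/-- The quotient web `Γ/f`. -/
def quotWeb (W : Web V) (f : V × V → ℝ≥0) : Web V where
  D := {e ∈ W.D | e.1 ∉ RFo W (TER W f) ∧ e.2 ∉ RFo W (TER W f)}
  A := Essential W (TER W f)
  B := W.B
  w := W.w

/-- `f ↷ g`: `f` plus the restriction of `g` to the edges of `Γ/f`. -/
noncomputable def hetz (W : Web V) (f g : V × V → ℝ≥0) : V × V → ℝ≥0 :=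
  fun e => f e + if e ∈ (quotWeb W f).D then g e else 0

/-- The residual network `RES(Δ,f)`. -/
noncomputable def resNetwork (N : Network V) (f : V × V → ℝ≥0) : Network V where
  E := N.E ∪ {e | (e.2, e.1) ∈ N.E ∧ e.2 ≠ N.s ∧ e.1 ≠ N.t}
  loopless := fun v hv => hv.elim (N.loopless v) (fun h => N.loopless v h.1)
  c := fun e => if e ∈ N.E then N.c e - f e else f (e.2, e.1)
  s := N.s
  t := N.t
  ne := N.ne
  no_in_s := fun v hv => hv.elim (N.no_in_s v) (fun h => h.2.1 rfl)
  no_out_t := fun v hv => hv.elim (N.no_out_t v) (fun h => h.2.2 rfl)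

/-- `f ⊕ g`, for `g` a flow in the residual network. -/
noncomputable def oplus (N : Network V) (f g : V × V → ℝ≥0) : V × V → ℝ≥0 :=
  fun e => if e ∈ N.E then f e + g e - g (e.2, e.1) else 0

/-- A finite directed s–t path. -/
def IsSTPath (N : Network V) (p : List V) : Prop :=
  IsWalk N.E p ∧ p.head? = some N.s ∧ p.getLast? = some N.t ∧ p.Nodup

/-- A mundane flow: a nonnegative combination of (characteristic functions of) s–t paths. -/
def IsMundane (N : Network V) (f : V × V → ℝ≥0) : Prop :=
  ∃ (ι : Type) (θ : ι → ℝ≥0) (P : ι → List V),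
    (∀ i, 0 < θ i) ∧ (∀ i, IsSTPath N (P i)) ∧
    ∀ e : V × V, (f e : ℝ≥0∞) = ∑' i, if e ∈ (P i).zip (P i).tail then (θ i : ℝ≥0∞) else 0

def NetLocallyFinite (N : Network V) : Prop :=
  ∀ v : V, {e ∈ N.E | e.1 = v ∨ e.2 = v}.Finite

/-- A finite-cut-respecting flow. -/
def IsFCR (N : Network V) (f : V × V → ℝ≥0) : Prop :=
  IsFlow N f ∧ ∀ S : Set V, N.s ∈ S → (cutEdges N S).Finite →
    (N.t ∈ S → cutFlow N f S = cutFlow N f Sᶜ) ∧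
    (N.t ∉ S → cutFlow N f S = cutFlow N f Sᶜ + flowValue N f)

/-- A cut-respecting flow. -/
def IsCR (N : Network V) (f : V × V → ℝ≥0) : Prop :=
  IsFCR N f ∧ ∀ S : Set V, IsCut N S →
    flowValue N f + cutFlow N f Sᶜ ≤ cutCap N S ∧
    cutFlow N f S ≤ cutCap N Sᶜ + flowValue N f


/-
A pointwise supremum of a chain of currents is again a current, because in `ℝ≥0∞` sums commute
with directed suprema. For the wave conditions, only finitely many vertices matter at a time
(those of one path), and along a chain every vertex that eventually emits flow does so from some
member on: hence for every path `p` some member `f'` of the chain, dominating any given one, has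
`TER f' ∩ p ⊆ TER (sup)`. Separation and the `RF` condition pass to the supremum through `f'`,
and Zorn's lemma, started at the zero wave, gives a maximal wave.
-/

theorem ENNReal.tsum_iSup_of_directed {ι α : Type*} {g : ι → α → ℝ≥0∞}
    (hg : Directed (· ≤ ·) g) : ∑' a, ⨆ i, g i a = ⨆ i, ∑' a, g i a := by
  simp_rw [ENNReal.tsum_eq_iSup_sum,
    ENNReal.finsetSum_iSup fun i j => (hg i j).imp fun _ hk a => ⟨hk.1 a, hk.2 a⟩]
  exact iSup_comm

lemma dplus_mono {f g : V × V → ℝ≥0} (h : f ≤ g) (x : V) : dplus f x ≤ dplus g x :=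
  ENNReal.tsum_le_tsum fun v => ENNReal.coe_le_coe.mpr (h (x, v))

lemma dminus_mono {f g : V × V → ℝ≥0} (h : f ≤ g) (x : V) : dminus f x ≤ dminus g x :=
  ENNReal.tsum_le_tsum fun v => ENNReal.coe_le_coe.mpr (h (v, x))

lemma isWave_zero (W : Web V) : IsWave W 0 := by
  have hd : ∀ x, dplus (0 : V × V → ℝ≥0) x = 0 := by simp [dplus]
  have hm : ∀ x, dminus (0 : V × V → ℝ≥0) x = 0 := by simp [dminus]
  refine ⟨⟨fun _ _ => rfl, by simp [hd], by simp [hm], by simp [hd], fun a _ => hm a,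
    fun b _ => hd b⟩, ?_, fun x _ => hd x⟩
  rintro p ⟨-, ⟨a, ha, hhead⟩, -⟩
  exact ⟨a, ⟨Or.inl ha, hd a⟩, List.mem_of_mem_head? hhead⟩

section Current

variable {W : Web V} {f g : V × V → ℝ≥0}

lemma IsCurrent.le_weight (hf : IsCurrent W f) (e : V × V) : f e ≤ W.w e.1 := by
  have : (f e : ℝ≥0∞) ≤ dplus f e.1 := ENNReal.le_tsum (f := fun v => (f (e.1, v) : ℝ≥0∞)) e.2
  exact ENNReal.coe_le_coe.mp (this.trans (hf.out_le e.1))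

lemma SAT_mono (hg : IsCurrent W g) (hfg : f ≤ g) : SAT W f ⊆ SAT W g := by
  rintro x (hA | hsat)
  · exact Or.inl hA
  · exact Or.inr ((hg.in_le x).antisymm (hsat ▸ dminus_mono hfg x))

end Current

noncomputable def pointwiseSup (c : Set (V × V → ℝ≥0)) : V × V → ℝ≥0 :=
  fun e => ⨆ f : c, (f : V × V → ℝ≥0) e

section Chain

variable {W : Web V} {c : Set (V × V → ℝ≥0)}

lemma bddAbove_range_apply (hcur : ∀ f ∈ c, IsCurrent W f) (e : V × V) :
    BddAbove (Set.range fun f : c => (f : V × V → ℝ≥0) e) :=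
  ⟨W.w e.1, by rintro _ ⟨f, rfl⟩; exact (hcur f f.2).le_weight e⟩

lemma le_pointwiseSup (hcur : ∀ f ∈ c, IsCurrent W f) {f : V × V → ℝ≥0} (hf : f ∈ c) :
    f ≤ pointwiseSup c := fun e =>
  le_ciSup (bddAbove_range_apply hcur e) ⟨f, hf⟩

lemma coe_pointwiseSup (hcur : ∀ f ∈ c, IsCurrent W f) (e : V × V) :
    (pointwiseSup c e : ℝ≥0∞) = ⨆ f : c, ((f : V × V → ℝ≥0) e : ℝ≥0∞) :=
  ENNReal.coe_iSup (bddAbove_range_apply hcur e)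

variable (hcur : ∀ f ∈ c, IsCurrent W f) (hc : IsChain (· ≤ ·) c)
include hcur hc

lemma dplus_pointwiseSup (x : V) :
    dplus (pointwiseSup c) x = ⨆ f : c, dplus (f : V × V → ℝ≥0) x := by
  simp_rw [dplus, coe_pointwiseSup hcur]
  exact ENNReal.tsum_iSup_of_directed <| hc.directed.mono_comp (· ≤ ·)
    (g := fun h v => (h (x, v) : ℝ≥0∞))
    fun _ _ h v => ENNReal.coe_le_coe.mpr (Pi.le_def.mp h (x, v))

lemma dminus_pointwiseSup (x : V) :
    dminus (pointwiseSup c) x = ⨆ f : c, dminus (f : V × V → ℝ≥0) x := by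
  simp_rw [dminus, coe_pointwiseSup hcur]
  exact ENNReal.tsum_iSup_of_directed <| hc.directed.mono_comp (· ≤ ·)
    (g := fun h v => (h (v, x) : ℝ≥0∞))
    fun _ _ h v => ENNReal.coe_le_coe.mpr (Pi.le_def.mp h (v, x))

lemma isCurrent_pointwiseSup : IsCurrent W (pointwiseSup c) where
  supp e he := le_antisymm (ciSup_le' fun f => ((hcur f f.2).supp e he).le) zero_le
  out_le x := (dplus_pointwiseSup hcur hc x).trans_le (iSup_le fun f => (hcur f f.2).out_le x)
  in_le x := (dminus_pointwiseSup hcur hc x).trans_le (iSup_le fun f => (hcur f f.2).in_le x)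
  flow_ineq x hx := by
    rw [dplus_pointwiseSup hcur hc, dminus_pointwiseSup hcur hc]
    exact iSup_mono fun f => (hcur f f.2).flow_ineq x hx
  a_in a ha := by
    rw [dminus_pointwiseSup hcur hc]
    exact ENNReal.iSup_eq_zero.mpr fun f => (hcur f f.2).a_in a ha
  b_out b hb := by
    rw [dplus_pointwiseSup hcur hc]
    exact ENNReal.iSup_eq_zero.mpr fun f => (hcur f f.2).b_out b hb

lemma exists_ge_forall_mem_TER {f : V × V → ℝ≥0} (hf : f ∈ c) (p : List V) :
    ∃ f' ∈ c, f ≤ f' ∧ ∀ y ∈ p, y ∈ TER W f' → y ∈ TER W (pointwiseSup c) := by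
  have : Nonempty c := ⟨⟨f, hf⟩⟩
  have hemit : ∀ y, ∃ g : c, dplus (pointwiseSup c) y ≠ 0 → dplus (g : V × V → ℝ≥0) y ≠ 0 := by
    intro y
    by_cases hy : dplus (pointwiseSup c) y = 0
    · exact ⟨⟨f, hf⟩, fun h => (h hy).elim⟩
    · rw [dplus_pointwiseSup hcur hc, ENNReal.iSup_eq_zero, not_forall] at hy
      obtain ⟨g, hg⟩ := hy
      exact ⟨g, fun _ => hg⟩
  choose g hg using hemit
  obtain ⟨f', hf'⟩ := hc.directed.finset_le (insert ⟨f, hf⟩ (p.toFinset.image g))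
  refine ⟨f', f'.2, hf' _ (Finset.mem_insert_self _ _), fun y hy hyT => ⟨?_, ?_⟩⟩
  · exact SAT_mono (isCurrent_pointwiseSup hcur hc) (le_pointwiseSup hcur f'.2) hyT.1
  · by_contra hne
    have hle : (g y : V × V → ℝ≥0) ≤ f' :=
      hf' _ (Finset.mem_insert_of_mem (Finset.mem_image_of_mem g (List.mem_toFinset.mpr hy)))
    exact hg y hne (le_antisymm ((dplus_mono hle y).trans_eq hyT.2) zero_le)

end Chain

lemma isWave_pointwiseSup {W : Web V} {c : Set (V × V → ℝ≥0)} (hwave : ∀ f ∈ c, IsWave W f)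
    (hc : IsChain (· ≤ ·) c) (hne : c.Nonempty) : IsWave W (pointwiseSup c) := by
  have hcur : ∀ f ∈ c, IsCurrent W f := fun f hf => (hwave f hf).1
  refine ⟨isCurrent_pointwiseSup hcur hc, fun p hp => ?_, fun x hx => ?_⟩
  · obtain ⟨f₀, hf₀⟩ := hne
    obtain ⟨f', hf', -, hTER⟩ := exists_ge_forall_mem_TER hcur hc hf₀ p
    obtain ⟨x, hxT, hxp⟩ := (hwave f' hf').2.1 p hp
    exact ⟨x, hTER x hxp hxT, hxp⟩
  · obtain ⟨p, hp, havoid⟩ :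
        ∃ p, IsABPath W.D {x} W.B p ∧ ∀ y ∈ TER W (pointwiseSup c), y ∉ p := by
      simpa [RF] using hx
    rw [dplus_pointwiseSup hcur hc, ENNReal.iSup_eq_zero]
    intro f
    obtain ⟨f', hf', hff', hTER⟩ := exists_ge_forall_mem_TER hcur hc f.2 p
    have hx' : x ∉ RF W (TER W f') := fun hRF => by
      obtain ⟨y, hyT, hyp⟩ := hRF p hp
      exact havoid y (hTER y hyp hyT) hyp
    exact le_antisymm ((dplus_mono hff' x).trans_eq ((hwave f' hf').2.2 x hx')) zero_le

theorem stmt2 (W : Web V) :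
    ∃ f, IsWave W f ∧ ∀ g, IsWave W g → (∀ e, f e ≤ g e) → g = f := by
  obtain ⟨f, -, hmax⟩ := zorn_le_nonempty₀ {f | IsWave W f}
    (fun c hcw hc f hf => ⟨pointwiseSup c, isWave_pointwiseSup hcw hc ⟨f, hf⟩,
      fun g hg => le_pointwiseSup (fun g hg => (hcw hg).1) hg⟩)
    0 (isWave_zero W)
  exact ⟨f, hmax.1, fun g hg hfg => le_antisymm (hmax.2 hg hfg) hfg⟩
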